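/- Let u ≥ 3 be an integer and let [n]_{p,q} = p^{n−1} + p^{n−2}q + ⋯ + pq^{n−2} + q^{n−1} denote the (p,q)-analogue of n. Define polynomials d^{(u)}_{n,k}(p,q) in ℝ[p,q] by d^{(u)}_{0,0}(p,q) = 1, d^{(u)}_{n,k}(p,q) = 0 unless 0 ≤ k ≤ n, d^{(u)}_{n+1,0}(p,q) = [u]_{p,q}·d^{(u)}_{n,0}(p,q) + pq·[u−1]_{p,q}·d^{(u)}_{n,1}(p,q), and d^{(u)}_{n+1,k}(p,q) = d^{(u)}_{n,k−1}(p,q) + (p+q)·d^{(u)}_{n,k}(p,q) + pq·d^{(u)}_{n,k+1}(p,q) for 1 ≤ k ≤ n. Then for all u ≥ 3, the sequence (d^{(u)}_{n,0}(p,q))_{n ≥ 0} is a Stieltjes moment sequence of polynomials, i.e., the Hankel matrix [d^{(u)}_{i+j,0}(p,q)]_{i,j ≥ 0} is (p,q)-totally positive. -/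

import Mathlib

/-- A multivariable real polynomial is nonnegative if all of its coefficients
are nonnegative. -/
def PolyNonneg {m : ℕ} (f : MvPolynomial (Fin m) ℝ) : Prop :=
  ∀ d : Fin m →₀ ℕ, 0 ≤ f.coeff d

/-- An infinite matrix of multivariable real polynomials is totally positive if
every minor has all nonnegative coefficients. -/
def xTP {m : ℕ} (M : ℕ → ℕ → MvPolynomial (Fin m) ℝ) : Prop :=
  ∀ (k : ℕ) (r c : Fin k → ℕ), StrictMono r → StrictMono c →
    PolyNonneg (Matrix.det (Matrix.of fun i j => M (r i) (c j)))

/-- The variable `p` in `ℝ[p,q]`. -/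
noncomputable def P : MvPolynomial (Fin 2) ℝ := MvPolynomial.X 0

/-- The variable `q` in `ℝ[p,q]`. -/
noncomputable def Q : MvPolynomial (Fin 2) ℝ := MvPolynomial.X 1

/-- The `(p,q)`-integer `[n]_{p,q} = p^{n-1} + p^{n-2}q + ⋯ + q^{n-1}
  = Σ_{i=0}^{n-1} p^{n-1-i} q^i`. -/
noncomputable def pqInt (n : ℕ) : MvPolynomial (Fin 2) ℝ :=
  ∑ i ∈ Finset.range n, P ^ (n - 1 - i) * Q ^ i

/-- The tridiagonal coefficient matrix `J⁽ᵘ⁾` of Example 3.4: diagonal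
`([u]_{p,q}, p+q, p+q, …)`, superdiagonal `(1, 1, …)`, and subdiagonal
`(pq[u-1]_{p,q}, pq, pq, …)`. -/
noncomputable def Ju (u : ℕ) : ℕ → ℕ → MvPolynomial (Fin 2) ℝ := fun a b =>
  if a = b then (if a = 0 then pqInt u else P + Q)
  else if b = a + 1 then 1
  else if a = b + 1 then (if b = 0 then P * Q * pqInt (u - 1) else P * Q)
  else 0


/-! The recurrence says that `d` is the output matrix of the tridiagonal production matrix
`J = Ju u`, i.e. `d m k = (J ^ m) 0 k`, so the Hankel matrix `d (i + j) 0 = (J ^ (i + j)) 0 0` is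
the product of the output matrices of `J` and of `Jᵀ` (the latter transposed). Total positivity
passes to products by Cauchy–Binet, and from a production matrix to its output matrix by
induction, peeling off one factor of `J` at a time. Finally `J` is totally positive, being the
product of an upper and a lower bidiagonal matrix whose entries have nonnegative coefficients.
Each minor only involves finitely many powers of `J`, so a finite truncation of `J` suffices. -/

open Finset

theorem Tuple.sort_comp_perm_of_strictMono {n : ℕ} {α : Type*} [LinearOrder α]
    {g : Fin n → α} (hg : StrictMono g) (σ : Equiv.Perm (Fin n)) :
    Tuple.sort (g ∘ σ) = σ⁻¹ := by
  have h : g ∘ (σ * Tuple.sort (g ∘ σ)) = g := by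
    have := Tuple.comp_perm_comp_sort_eq_comp_sort (f := g) (σ := σ)
    rwa [Tuple.sort_eq_refl_iff_monotone.mpr hg.monotone] at this
  refine eq_inv_of_mul_eq_one_right ?_
  ext i
  exact congrArg Fin.val (hg.injective (congrFun h i))

namespace Matrix

variable {R : Type*} [CommRing R] {k : ℕ} {μ : Type*} [Fintype μ]

theorem det_mul_eq_sum_prod_mul_det_submatrix (A : Matrix (Fin k) μ R)
    (B : Matrix μ (Fin k) R) :
    (A * B).det = ∑ f : Fin k → μ, (∏ i, A i (f i)) * (B.submatrix f id).det := by
  have hrows : A * B = fun i => ∑ t, A i t • B t := by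
    ext i j
    simp [mul_apply, Finset.sum_apply]
  have hdet : (A * B).det =
      (detRowAlternating : (Fin k → R) [⋀^Fin k]→ₗ[R] R).toMultilinearMap
        (fun i => ∑ t, A i t • B t) := congrArg _ hrows
  rw [hdet, MultilinearMap.map_sum]
  refine sum_congr rfl fun f _ => ?_
  rw [MultilinearMap.map_smul_univ]
  rfl

open Classical in
/-- The Cauchy–Binet formula. -/
theorem det_mul_eq_sum_strictMono [LinearOrder μ] (A : Matrix (Fin k) μ R)
    (B : Matrix μ (Fin k) R) :
    (A * B).det = ∑ s ∈ {s : Fin k → μ | StrictMono s},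
      (A.submatrix id s).det * (B.submatrix s id).det := by
  set F : (Fin k → μ) → R := fun f => (∏ i, A i (f i)) * (B.submatrix f id).det
  have hinj : ∑ f, F f = ∑ f ∈ {f : Fin k → μ | Function.Injective f}, F f := by
    refine (sum_filter_of_ne fun f _ hf => ?_).symm
    by_contra hninj
    obtain ⟨a, b, hab, hne⟩ := Function.not_injective_iff.mp hninj
    have hB : (B.submatrix f id).det = 0 :=
      det_zero_of_row_eq hne (funext fun j => by rw [submatrix_apply, submatrix_apply, hab])
    exact hf (by simp [F, hB])
  have hsort : ∑ f ∈ {f : Fin k → μ | Function.Injective f}, F f =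
      ∑ p ∈ ({s : Fin k → μ | StrictMono s} : Finset _) ×ˢ
        (univ : Finset (Equiv.Perm (Fin k))), F (p.1 ∘ p.2) := by
    refine sum_nbij' (fun f => (f ∘ Tuple.sort f, (Tuple.sort f)⁻¹)) (fun p => p.1 ∘ p.2)
      ?_ ?_ ?_ ?_ ?_
    · intro f hf
      simp only [mem_filter, mem_univ, true_and, mem_product, and_true] at hf ⊢
      exact (Tuple.monotone_sort f).strictMono_of_injective
        (hf.comp (Tuple.sort f).injective)
    · rintro ⟨g, σ⟩ hp
      simp only [mem_filter, mem_univ, true_and, mem_product, and_true] at hp ⊢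
      exact hp.injective.comp σ.injective
    · intro f _
      ext i
      simp
    · rintro ⟨g, σ⟩ hp
      simp only [mem_filter, mem_univ, true_and, mem_product, and_true] at hp
      rw [Tuple.sort_comp_perm_of_strictMono hp]
      ext i <;> simp
    · intro f _
      simp only [Function.comp_assoc, Equiv.Perm.coe_inv,
        Equiv.self_comp_symm, Function.comp_id]
  have hperm (s : Fin k → μ) : ∑ σ : Equiv.Perm (Fin k), F (s ∘ σ) =
      (A.submatrix id s).det * (B.submatrix s id).det := by
    rw [← det_transpose (A.submatrix id s), det_apply', sum_mul]
    refine sum_congr rfl fun σ _ => ?_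
    have : B.submatrix (s ∘ σ) id = (B.submatrix s id).submatrix σ id := rfl
    simp only [F, this, det_permute, transpose_apply, submatrix_apply, id,
      Function.comp_apply]
    ring
  rw [det_mul_eq_sum_prod_mul_det_submatrix, hinj, hsort, sum_product]
  exact sum_congr rfl fun s _ => hperm s


theorem det_succ_eq_mul_of_row_zero (A : Matrix (Fin (k + 1)) (Fin (k + 1)) R)
    (h : ∀ j ≠ 0, A 0 j = 0) : A.det = A 0 0 * (A.submatrix Fin.succ Fin.succ).det := by
  rw [det_succ_row_zero, Fintype.sum_eq_single 0 fun j hj => by rw [h j hj, mul_zero, zero_mul]]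
  simp

theorem det_succ_eq_mul_of_column_zero (A : Matrix (Fin (k + 1)) (Fin (k + 1)) R)
    (h : ∀ i ≠ 0, A i 0 = 0) : A.det = A 0 0 * (A.submatrix Fin.succ Fin.succ).det := by
  rw [← det_transpose, det_succ_eq_mul_of_row_zero _ h, ← transpose_submatrix, det_transpose,
    transpose_apply]

variable (S : Subsemiring R)

def IsTotallyPositive {ι κ : Type*} [LinearOrder ι] [LinearOrder κ] (M : Matrix ι κ R) :
    Prop :=
  ∀ (k : ℕ) (r : Fin k → ι) (c : Fin k → κ), StrictMono r → StrictMono c →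
    (M.submatrix r c).det ∈ S

variable {S} {ι κ : Type*} [LinearOrder ι] [LinearOrder κ]

theorem det_mul_mem_of_det_submatrix_mem [LinearOrder μ] {A : Matrix (Fin k) μ R}
    {B : Matrix μ (Fin k) R} (hA : ∀ s, StrictMono s → (A.submatrix id s).det ∈ S)
    (hB : ∀ s, StrictMono s → (B.submatrix s id).det ∈ S) : (A * B).det ∈ S := by
  classical
  rw [det_mul_eq_sum_strictMono]
  exact sum_mem fun s hs => mul_mem (hA s (mem_filter.mp hs).2) (hB s (mem_filter.mp hs).2)

theorem IsTotallyPositive.mul [LinearOrder μ] {A : Matrix ι μ R} {B : Matrix μ κ R}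
    (hA : A.IsTotallyPositive S) (hB : B.IsTotallyPositive S) : (A * B).IsTotallyPositive S :=
  fun _ r c hr hc => det_mul_mem_of_det_submatrix_mem (A := A.submatrix r id)
    (B := B.submatrix id c) (fun s hs => hA _ r s hr hs) (fun s hs => hB _ s c hs hc)

theorem IsTotallyPositive.transpose {M : Matrix ι κ R} (hM : M.IsTotallyPositive S) :
    Mᵀ.IsTotallyPositive S := fun _ r c hr hc => by
  rw [← transpose_submatrix, det_transpose]
  exact hM _ c r hc hr

theorem IsTotallyPositive.submatrix {ι' κ' : Type*} [LinearOrder ι'] [LinearOrder κ']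
    {M : Matrix ι κ R} (hM : M.IsTotallyPositive S) {f : ι' → ι} {g : κ' → κ}
    (hf : StrictMono f) (hg : StrictMono g) : (M.submatrix f g).IsTotallyPositive S :=
  fun _ r c hr hc => hM _ (f ∘ r) (g ∘ c) (hf.comp hr) (hg.comp hc)

theorem isTotallyPositive_of_lowerBidiagonal {M : Matrix ℕ ℕ R} (hmem : ∀ a b, M a b ∈ S)
    (hzero : ∀ a b, a ≠ b → a ≠ b + 1 → M a b = 0) : M.IsTotallyPositive S := by
  intro k
  induction k with
  | zero => intro r c _ _; simp
  | succ k ih =>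
    intro r c hr hc
    have hminor : ((M.submatrix r c).submatrix Fin.succ Fin.succ).det ∈ S :=
      ih _ _ (hr.comp Fin.strictMono_succ) (hc.comp Fin.strictMono_succ)
    have hr0 (i : Fin (k + 1)) (hi : i ≠ 0) : r 0 < r i := hr (Fin.pos_of_ne_zero hi)
    have hc0 (j : Fin (k + 1)) (hj : j ≠ 0) : c 0 < c j := hc (Fin.pos_of_ne_zero hj)
    rcases lt_trichotomy (r 0) (c 0) with hlt | heq | hgt
    · have hrow (j : Fin (k + 1)) : M (r 0) (c j) = 0 := by
        have := hc.monotone (Fin.zero_le j)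
        exact hzero _ _ (by omega) (by omega)
      rw [det_eq_zero_of_row_eq_zero 0 hrow]
      exact S.zero_mem
    · rw [det_succ_eq_mul_of_row_zero _ fun j hj => hzero _ _ (by grind) (by grind)]
      exact mul_mem (hmem _ _) hminor
    · by_cases hsub : r 0 = c 0 + 1
      · rw [det_succ_eq_mul_of_column_zero _ fun i hi => hzero _ _ (by grind) (by grind)]
        exact mul_mem (hmem _ _) hminor
      · have hcol (i : Fin (k + 1)) : M (r i) (c 0) = 0 := by
          have := hr.monotone (Fin.zero_le i)
          exact hzero _ _ (by omega) (by omega)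
        rw [det_eq_zero_of_column_eq_zero 0 hcol]
        exact S.zero_mem

section OutputMatrix

variable [LinearOrder μ] [OrderBot μ]

/-- The output matrix of the production matrix `M`, in the terminology of Riordan arrays. -/
def outputMatrix (M : Matrix μ μ R) : Matrix ℕ μ R := of fun m t => (M ^ m) ⊥ t

theorem IsTotallyPositive.outputMatrix {M : Matrix μ μ R} (hM : M.IsTotallyPositive S) :
    (outputMatrix M).IsTotallyPositive S := by
  intro k
  induction k with
  | zero => intro r c _ _; simp
  | succ k ihk =>
    suffices ∀ m (r : Fin (k + 1) → ℕ) (c : Fin (k + 1) → μ),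
        StrictMono r → StrictMono c → r 0 = m → (M.outputMatrix.submatrix r c).det ∈ S from
      fun r c hr hc => this _ r c hr hc rfl
    intro m
    induction m with
    | zero =>
      intro r c hr hc hr0
      have hrow (j : Fin (k + 1)) : M.outputMatrix (r 0) (c j) = if c j = ⊥ then 1 else 0 := by
        simp [Matrix.outputMatrix, hr0, one_apply, eq_comm]
      by_cases hc0 : c 0 = ⊥
      · have hcj (j : Fin (k + 1)) (hj : j ≠ 0) : c j ≠ ⊥ :=
          (hc0 ▸ hc (Fin.pos_of_ne_zero hj)).ne_bot
        rw [det_succ_eq_mul_of_row_zero _ fun j hj => by simp [hrow, hcj j hj], submatrix_apply,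
          hrow, if_pos hc0, one_mul]
        exact ihk _ _ (hr.comp Fin.strictMono_succ) (hc.comp Fin.strictMono_succ)
      · have hcj (j : Fin (k + 1)) : c j ≠ ⊥ :=
          ((bot_lt_iff_ne_bot.mpr hc0).trans_le (hc.monotone (Fin.zero_le j))).ne_bot
        rw [det_eq_zero_of_row_eq_zero 0 fun j => by simp [hrow, hcj j]]
        exact S.zero_mem
    | succ m ihm =>
      intro r c hr hc hr0
      have hpos (i : Fin (k + 1)) : 1 ≤ r i := by
        have := hr.monotone (Fin.zero_le i)
        omega
      have hfactor : M.outputMatrix.submatrix r c =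
          M.outputMatrix.submatrix (fun i => r i - 1) id * M.submatrix id c := by
        ext i j
        rw [submatrix_apply, Matrix.outputMatrix, of_apply, ← Nat.sub_add_cancel (hpos i),
          pow_succ]
        rfl
      rw [hfactor]
      have hr' : StrictMono fun i => r i - 1 := fun a b hab => by
        have := hr hab
        have := hpos a
        dsimp only
        omega
      exact det_mul_mem_of_det_submatrix_mem (fun s hs => ihm _ s hr' hs (by simp [hr0]))
        (fun s hs => hM _ s c hs hc)

theorem hankel_pow_eq_outputMatrix_mul (M : Matrix μ μ R) :
    of (fun i j : ℕ => (M ^ (i + j)) ⊥ ⊥) = M.outputMatrix * (Mᵀ.outputMatrix)ᵀ := by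
  ext i j
  simp [Matrix.outputMatrix, pow_add, mul_apply, ← transpose_pow]

theorem IsTotallyPositive.hankel_pow {M : Matrix μ μ R} (hM : M.IsTotallyPositive S) :
    (of fun i j : ℕ => (M ^ (i + j)) ⊥ ⊥).IsTotallyPositive S := by
  rw [hankel_pow_eq_outputMatrix_mul]
  exact hM.outputMatrix.mul hM.transpose.outputMatrix.transpose

end OutputMatrix

end Matrix

open MvPolynomial in
def polyNonnegSubsemiring (m : ℕ) : Subsemiring (MvPolynomial (Fin m) ℝ) where
  carrier := {f | PolyNonneg f}
  zero_mem' _ := by simp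
  one_mem' d := by rw [coeff_one]; split <;> norm_num
  add_mem' hf hg d := by rw [coeff_add]; exact add_nonneg (hf d) (hg d)
  mul_mem' hf hg d := by
    rw [coeff_mul]
    exact sum_nonneg fun x _ => mul_nonneg (hf x.1) (hg x.2)

theorem X_mem_polyNonnegSubsemiring {m : ℕ} (i : Fin m) :
    MvPolynomial.X i ∈ polyNonnegSubsemiring m := fun d => by
  rw [MvPolynomial.coeff_X]
  split <;> norm_num

theorem xTP_iff_isTotallyPositive {m : ℕ} (M : ℕ → ℕ → MvPolynomial (Fin m) ℝ) :
    xTP M ↔ (Matrix.of M).IsTotallyPositive (polyNonnegSubsemiring m) :=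
  Iff.rfl

theorem P_mem : P ∈ polyNonnegSubsemiring 2 := X_mem_polyNonnegSubsemiring 0

theorem Q_mem : Q ∈ polyNonnegSubsemiring 2 := X_mem_polyNonnegSubsemiring 1

theorem pqInt_mem (n : ℕ) : pqInt n ∈ polyNonnegSubsemiring 2 :=
  sum_mem fun _ _ => mul_mem (pow_mem P_mem _) (pow_mem Q_mem _)

theorem pqInt_succ (n : ℕ) : pqInt (n + 1) = Q ^ n + P * pqInt n := by
  simp only [pqInt, Nat.add_sub_cancel, mul_comm (P ^ _)]
  exact geom_sum₂_succ_eq Q P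

open Matrix

/-- With `juLower` this factors `Ju u`: the diagonal `([u], p + q, p + q, …)` of `Ju u` splits as
`q ^ (u - 1) + p [u - 1]` followed by `q + p`, the subdiagonal as `q · p [u - 1]` followed by
`q · p`. -/
noncomputable def juUpper (u : ℕ) : Matrix ℕ ℕ (MvPolynomial (Fin 2) ℝ) := of fun a b =>
  if b = a then (if a = 0 then Q ^ (u - 1) else Q) else if b = a + 1 then 1 else 0

noncomputable def juLower (u : ℕ) : Matrix ℕ ℕ (MvPolynomial (Fin 2) ℝ) := of fun a b =>
  if a = b then 1 else if a = b + 1 then (if b = 0 then P * pqInt (u - 1) else P) else 0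

theorem juUpper_isTotallyPositive (u : ℕ) :
    (juUpper u).IsTotallyPositive (polyNonnegSubsemiring 2) := by
  refine (isTotallyPositive_of_lowerBidiagonal (M := (juUpper u)ᵀ) (fun a b => ?_)
    fun a b h₁ h₂ => by simp [juUpper, h₁, h₂]).transpose
  simp only [juUpper, transpose_apply, of_apply]
  split_ifs <;> simp [pow_mem, Q_mem]

theorem juLower_isTotallyPositive (u : ℕ) :
    (juLower u).IsTotallyPositive (polyNonnegSubsemiring 2) := by
  refine isTotallyPositive_of_lowerBidiagonal (fun a b => ?_)
    fun a b h₁ h₂ => by simp [juLower, h₁, h₂]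
  simp only [juLower, of_apply]
  split_ifs <;> simp [mul_mem, P_mem, pqInt_mem]

noncomputable def juTrunc (u n : ℕ) : Matrix (Fin n) (Fin n) (MvPolynomial (Fin 2) ℝ) :=
  (of (Ju u)).submatrix Fin.val Fin.val

/-- The inner dimension is `n + 1`, so that the last diagonal entry still receives its `p`. -/
theorem juTrunc_eq_mul {u : ℕ} (hu : 1 ≤ u) (n : ℕ) :
    juTrunc u n =
      (juUpper u).submatrix (Fin.val : Fin n → ℕ) (Fin.val : Fin (n + 1) → ℕ) *
        (juLower u).submatrix (Fin.val : Fin (n + 1) → ℕ) (Fin.val : Fin n → ℕ) := by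
  obtain ⟨v, rfl⟩ : ∃ v, u = v + 1 := ⟨u - 1, by omega⟩
  ext a b : 1
  rw [mul_apply, Fintype.sum_eq_add a.castSucc a.succ (by simp [Fin.ext_iff])
    fun t ht => mul_eq_zero_of_left (by
      have hta : (t : ℕ) ≠ a ∧ (t : ℕ) ≠ a + 1 := by simpa [Fin.ext_iff] using ht
      simp [juUpper, hta.1, hta.2]) _]
  simp only [juTrunc, Ju, juUpper, juLower, submatrix_apply, of_apply, Fin.val_succ,
    Fin.val_castSucc, pqInt_succ, Nat.add_sub_cancel]
  split_ifs <;> first | omega | ring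

theorem Ju_eq_zero {u a b : ℕ} (h₁ : a ≠ b) (h₂ : b ≠ a + 1) (h₃ : a ≠ b + 1) :
    Ju u a b = 0 := by
  simp [Ju, h₁, h₂, h₃]

theorem sum_range_mul_Ju_eq {u : ℕ} {d : ℕ → ℕ → MvPolynomial (Fin 2) ℝ}
    (hzero : ∀ n k, n < k → d n k = 0)
    (hrec0 : ∀ n, d (n + 1) 0 = pqInt u * d n 0 + P * Q * pqInt (u - 1) * d n 1)
    (hrec : ∀ n k, d (n + 1) (k + 1) = d n k + (P + Q) * d n (k + 1) + P * Q * d n (k + 2))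
    {m s N : ℕ} (hm : m < N) :
    ∑ t ∈ range N, d m t * Ju u t s = d (m + 1) s := by
  have hwide : ∑ t ∈ range N, d m t * Ju u t s =
      ∑ t ∈ range (N + s + 2), d m t * Ju u t s :=
    sum_subset (range_subset_range.mpr (by omega)) fun t _ ht => by
      rw [mem_range, not_lt] at ht
      exact mul_eq_zero_of_left (hzero m t (by omega)) _
  have hnarrow : ∑ t ∈ range (s + 2), d m t * Ju u t s =
      ∑ t ∈ range (N + s + 2), d m t * Ju u t s :=
    sum_subset (range_subset_range.mpr (by omega)) fun t _ ht => by
      rw [mem_range, not_lt] at ht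
      exact mul_eq_zero_of_right _ (Ju_eq_zero (by omega) (by omega) (by omega))
  rw [hwide, ← hnarrow]
  cases s with
  | zero =>
    simp [sum_range_succ, Ju, hrec0]
    ring
  | succ k =>
    rw [sum_range_succ, sum_range_succ, sum_range_succ, sum_eq_zero fun t ht => by
      rw [mem_range] at ht
      exact mul_eq_zero_of_right _ (Ju_eq_zero (by omega) (by omega) (by omega))]
    simp [Ju, hrec]
    ring

theorem outputMatrix_juTrunc_eq {u : ℕ} {d : ℕ → ℕ → MvPolynomial (Fin 2) ℝ}
    (h00 : d 0 0 = 1)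
    (hzero : ∀ n k, n < k → d n k = 0)
    (hrec0 : ∀ n, d (n + 1) 0 = pqInt u * d n 0 + P * Q * pqInt (u - 1) * d n 1)
    (hrec : ∀ n k, d (n + 1) (k + 1) = d n k + (P + Q) * d n (k + 1) + P * Q * d n (k + 2))
    {n m : ℕ} (hm : m ≤ n) (s : Fin (n + 1)) :
    (juTrunc u (n + 1)).outputMatrix m s = d m s := by
  induction m generalizing s with
  | zero =>
    rcases eq_or_ne s 0 with rfl | hs
    · simp [outputMatrix, bot_eq_zero, h00]
    · simp [outputMatrix, bot_eq_zero, one_apply, hs.symm,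
        hzero 0 s (Fin.pos_iff_ne_zero.mpr hs)]
  | succ m ih =>
    rw [← sum_range_mul_Ju_eq hzero hrec0 hrec (N := n + 1) (by omega),
      ← Fin.sum_univ_eq_sum_range]
    simp only [outputMatrix, of_apply, pow_succ, mul_apply] at ih ⊢
    exact sum_congr rfl fun t _ => by rw [ih (by omega)]; rfl

theorem juTrunc_isTotallyPositive {u : ℕ} (hu : 1 ≤ u) (n : ℕ) :
    (juTrunc u n).IsTotallyPositive (polyNonnegSubsemiring 2) := by
  rw [juTrunc_eq_mul hu]
  exact ((juUpper_isTotallyPositive u).submatrix Fin.val_strictMono Fin.val_strictMono).mul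
    ((juLower_isTotallyPositive u).submatrix Fin.val_strictMono Fin.val_strictMono)

/-- Example 3.4: for `u ≥ 3`, the `(p,q)`-Catalan-like sequence with
`s₀ = [u]_{p,q}`, `sₖ = p + q` for `k ≥ 1`, `t₁ = pq[u-1]_{p,q}` and `tₖ = pq`
for `k ≥ 2` is a Stieltjes moment sequence of polynomials. -/
theorem example34_stieltjes
    (u : ℕ) (hu : 3 ≤ u)
    (d : ℕ → ℕ → MvPolynomial (Fin 2) ℝ)
    (h00 : d 0 0 = 1)
    (hzero : ∀ n k, n < k → d n k = 0)
    (hrec0 : ∀ n, d (n + 1) 0 =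
      pqInt u * d n 0 + P * Q * pqInt (u - 1) * d n 1)
    (hrec : ∀ n k, d (n + 1) (k + 1) =
      d n k + (P + Q) * d n (k + 1) + P * Q * d n (k + 2)) :
    xTP (fun i j => d (i + j) 0) := by
  rw [xTP_iff_isTotallyPositive]
  intro k r c hr hc
  obtain ⟨n, hn⟩ : ∃ n, ∀ i j, r i + c j ≤ n :=
    ⟨∑ i, r i + ∑ j, c j, fun i j => add_le_add (single_le_sum (by simp) (mem_univ i))
      (single_le_sum (by simp) (mem_univ j))⟩
  have hJ := juTrunc_isTotallyPositive (by omega : 1 ≤ u) (n + 1)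
  convert hJ.hankel_pow k r c hr hc using 2
  ext i j : 1
  exact (outputMatrix_juTrunc_eq h00 hzero hrec0 hrec (hn i j) ⊥).symm
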